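/- arXiv:2007.00533 — 4 statements merged into one kernel-verified Lean document; each statement's English description precedes it below -/
import Mathlib

section
/- Let τ > 0, q₁ ≥ 0, q₂ > 0, and define ζ = max(√2·e·q₁/τ, 4e·√(q₂/τ)). Then the infimum over z > 0 of z^(−τ)·exp(q₂(z²−1) + q₁(z−1)) is at most ζ^τ. -/
/-! Writing `ζ = e · m`, evaluate at `z = 1 / m = e / ζ`. The two terms of the maximum give
`√2 q₁ z ≤ τ` and `16 q₂ z² ≤ τ`, so the exponent is at most `q₂ z² + q₁ z ≤ τ` (as `1/√2 + 1/16 < 1`),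
and `z^(-τ) e^τ = (e / z)^τ = ζ^τ`. -/

open Real

lemma rpow_neg_mul_exp_le_div_rpow {z s t : ℝ} (hz : 0 < z) (hst : s ≤ t) :
    z ^ (-t) * exp s ≤ (exp 1 / z) ^ t := by
  rw [div_rpow (exp_pos 1).le hz.le, exp_one_rpow, rpow_neg hz.le, div_eq_inv_mul]
  exact mul_le_mul_of_nonneg_left (exp_le_exp.2 hst) (by positivity)

lemma mul_sq_sub_one_add_mul_sub_one_le {τ q₁ q₂ z : ℝ} (hq₁ : 0 ≤ q₁) (hq₂ : 0 ≤ q₂) (hz : 0 ≤ z)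
    (h₁ : √2 * q₁ * z ≤ τ) (h₂ : 16 * q₂ * z ^ 2 ≤ τ) :
    q₂ * (z ^ 2 - 1) + q₁ * (z - 1) ≤ τ := by
  have hsqrt : (16 / 15 : ℝ) ≤ √2 := le_sqrt_of_sq_le (by norm_num)
  nlinarith [mul_le_mul_of_nonneg_right hsqrt (mul_nonneg hq₁ hz)]

lemma mul_sq_sub_one_add_mul_sub_one_le_of_le_max_terms {τ q₁ q₂ c ζ : ℝ} (hτ : 0 < τ) (hq₁ : 0 ≤ q₁) (hq₂ : 0 ≤ q₂)
    (hc : 0 < c) (hζ : 0 < ζ) (h₁ : √2 * c * q₁ / τ ≤ ζ) (h₂ : 4 * c * √(q₂ / τ) ≤ ζ) :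
    q₂ * ((c / ζ) ^ 2 - 1) + q₁ * (c / ζ - 1) ≤ τ := by
  refine mul_sq_sub_one_add_mul_sub_one_le hq₁ hq₂ (by positivity) ?_ ?_
  · rw [div_le_iff₀ hτ] at h₁
    calc √2 * q₁ * (c / ζ) = √2 * c * q₁ / ζ := by ring
      _ ≤ τ := div_le_of_le_mul₀ hζ.le hτ.le (by linarith)
  · have hsq : 16 * c ^ 2 * (q₂ / τ) ≤ ζ ^ 2 := by
      have := pow_le_pow_left₀ (by positivity) h₂ 2
      rw [mul_pow, sq_sqrt (by positivity)] at this
      linarith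
    calc 16 * q₂ * (c / ζ) ^ 2 = 16 * c ^ 2 * (q₂ / τ) / ζ ^ 2 * τ := by field_simp
      _ ≤ τ := mul_le_of_le_one_left hτ.le ((div_le_one (by positivity)).2 hsq)

theorem stmt_6 (τ q₁ q₂ : ℝ) (hτ : 0 < τ) (hq₁ : 0 ≤ q₁) (hq₂ : 0 < q₂) :
    let e := Real.exp 1
    let ζ := max (Real.sqrt 2 * e * q₁ / τ) (4 * e * Real.sqrt (q₂ / τ))
    ∃ z : ℝ, 0 < z ∧
      z ^ (-τ) * Real.exp (q₂ * (z ^ 2 - 1) + q₁ * (z - 1)) ≤ ζ ^ τ := by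
  intro e ζ
  have he : 0 < e := exp_pos 1
  have hζ : 0 < ζ := lt_max_of_lt_right (by positivity)
  refine ⟨e / ζ, by positivity, ?_⟩
  calc _ ≤ (e / (e / ζ)) ^ τ :=
        rpow_neg_mul_exp_le_div_rpow (by positivity)
          (mul_sq_sub_one_add_mul_sub_one_le_of_le_max_terms hτ hq₁ hq₂.le he hζ (le_max_left _ _) (le_max_right _ _))
    _ = ζ ^ τ := by rw [div_div_cancel₀ he.ne']
end

section
/- For 0 < q < s ≤ 1, setting p₁₁ = qs, p₁₀ = p₀₁ = q(1−s), p₀₀ = 1−2q+qs and σ² = q(s−q), define T = p₁₁(eᵗ−1)+1 and D = σ²(eᵗ−1) for t > 0. Then the discriminant T² − 4D is strictly positive. -/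
theorem stmt_7_general (q s t : ℝ) (hq : 0 < q) (ht : 0 < t) :
    (q * s * (Real.exp t - 1) + 1) ^ 2 - 4 * (q * (s - q) * (Real.exp t - 1)) > 0 := by
  have hx : 0 < Real.exp t - 1 := sub_pos.mpr (Real.one_lt_exp_iff.mpr ht)
  calc (q * s * (Real.exp t - 1) + 1) ^ 2 - 4 * (q * (s - q) * (Real.exp t - 1))
      = (q * s * (Real.exp t - 1) - 1) ^ 2 + 4 * q ^ 2 * (Real.exp t - 1) := by ring
    _ > 0 := add_pos_of_nonneg_of_pos (sq_nonneg _) (by positivity)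

theorem stmt_7 (q s t : ℝ) (hq : 0 < q) (hqs : q < s) (hs : s ≤ 1) (ht : 0 < t) :
    (q * s * (Real.exp t - 1) + 1) ^ 2 - 4 * (q * (s - q) * (Real.exp t - 1)) > 0 :=
  stmt_7_general q s t hq ht
end

section
/- Let X₀,…,Xₙ be i.i.d. random variables each taking values in {0,1}², with pair distribution P (so Xᵢ = (Aᵢ,Bᵢ) with P(1,1)=p₁₁, covariance σ² = p₁₁ − (p₁₁+p₀₁)² possibly nonzero), and let W = ∑_{i=0}^{n} AᵢB_{i+1 mod (n+1)}. Suppose T = p₁₁(eᵗ−1)+1 and D = σ²(eᵗ−1) satisfy T² − 4D > 0 and let α,β = (T ± √(T²−4D))/2. Then E[e^{tW}] = α^{n+1} + β^{n+1}. -/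
/-!
Encode each pair `(Aᵢ, Bᵢ)` as a point of `Fin 2 × Fin 2`. By independence, `E[e^{tW}]` is the
sum over all configurations `y` of `∏ᵢ P(yᵢ) e^{t aᵢ b_{i+1}}`. Summing out the `A`-coordinates
turns this into the cyclic sum `∑_b ∏ᵢ M(bᵢ, b_{i+1}) = tr M^{n+1}` for the `2 × 2` transfer
matrix `M(b, b') = ∑ₐ P(a, b) e^{t a b'}`. Since `tr M = T` and `det M = D`, Cayley–Hamilton
gives `tr M^m = α^m + β^m`, where `α, β` are the roots of `X² - T X + D`.
-/

open MeasureTheory ProbabilityTheory Finset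

theorem Fin.cons_add_one_eq_snoc {S : Type*} {m : ℕ} (s : S) (x : Fin m → S) (i : Fin (m + 1)) :
    (Fin.cons s x : Fin (m + 1) → S) (i + 1) = (Fin.snoc x s : Fin (m + 1) → S) i := by
  induction i using Fin.lastCases with
  | last => simp
  | cast j => simp

namespace Matrix

section Paths

variable {S R : Type*} [Fintype S] [DecidableEq S] [CommSemiring R]

theorem pow_succ_apply_eq_sum_prod (M : Matrix S S R) (k : ℕ) (s s' : S) :
    (M ^ (k + 1)) s s' =
      ∑ x : Fin k → S, ∏ i, M ((Fin.cons s x : Fin (k + 1) → S) i)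
        ((Fin.snoc x s' : Fin (k + 1) → S) i) := by
  induction k generalizing s with
  | zero => simp [Fin.snoc]
  | succ k ih =>
    rw [pow_succ', mul_apply, ← (Fin.consEquiv fun _ => S).sum_comp, Fintype.sum_prod_type]
    refine sum_congr rfl fun u _ => ?_
    rw [ih, mul_sum]
    refine sum_congr rfl fun x _ => ?_
    simp [Fin.consEquiv, Fin.prod_univ_succ, ← Fin.cons_snoc_eq_snoc_cons]

theorem trace_pow_succ_eq_sum_prod (M : Matrix S S R) (m : ℕ) :
    trace (M ^ (m + 1)) = ∑ x : Fin (m + 1) → S, ∏ i, M (x i) (x (i + 1)) := by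
  rw [← (Fin.consEquiv fun _ => S).sum_comp, Fintype.sum_prod_type]
  refine sum_congr rfl fun s _ => ?_
  rw [diag_apply, pow_succ_apply_eq_sum_prod]
  refine sum_congr rfl fun x _ => ?_
  simp [Fin.consEquiv, Fin.cons_add_one_eq_snoc]

theorem sum_prod_eq_trace_pow {α β : Type*} [Fintype α] [Fintype β] [DecidableEq β]
    (f : α → β → β → R) (m : ℕ) :
    ∑ y : Fin (m + 1) → α × β, ∏ i, f (y i).1 (y i).2 (y (i + 1)).2 =
      trace ((of fun b b' => ∑ a, f a b b') ^ (m + 1)) := by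
  rw [trace_pow_succ_eq_sum_prod,
    ← (Equiv.arrowProdEquivProdArrow (Fin (m + 1)) (fun _ => α) (fun _ => β)).symm.sum_comp,
    Fintype.sum_prod_type_right]
  refine sum_congr rfl fun b _ => ?_
  simp [Finset.prod_univ_sum]

end Paths

section CardTwo

variable {ι R : Type*} [Fintype ι] [DecidableEq ι] [CommRing R] [Nontrivial R]

theorem sq_eq_of_card_eq_two (hι : Fintype.card ι = 2) (M : Matrix ι ι R) :
    M ^ 2 = M.trace • M - M.det • 1 := by
  have hCH := M.aeval_self_charpoly
  simp only [charpoly_of_card_eq_two (M := M) hι, map_add, map_sub, map_pow, map_mul,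
    Polynomial.aeval_X, Polynomial.aeval_C, Algebra.algebraMap_eq_smul_one, smul_mul_assoc,
    one_mul] at hCH
  rw [← sub_eq_zero, ← hCH]
  abel

theorem trace_pow_of_card_eq_two (hι : Fintype.card ι = 2) {M : Matrix ι ι R} {α β : R}
    (htr : M.trace = α + β) (hdet : M.det = α * β) (m : ℕ) :
    trace (M ^ m) = α ^ m + β ^ m := by
  induction m using Nat.twoStepInduction with
  | zero => norm_num [hι]
  | one => simpa using htr
  | more k ih₀ ih₁ =>
    rw [pow_add, sq_eq_of_card_eq_two hι, mul_sub, trace_sub, Matrix.mul_smul, Matrix.mul_smul,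
      trace_smul, trace_smul, mul_one, ← pow_succ, ih₀, ih₁, htr, hdet, smul_eq_mul, smul_eq_mul]
    ring

end CardTwo

end Matrix

theorem ProbabilityTheory.iIndepFun.integral_comp_eq_sum {Ω ι S : Type*}
    {_ : MeasurableSpace Ω} {μ : Measure Ω} [Fintype ι] [DecidableEq ι] [Fintype S]
    [MeasurableSpace S] [MeasurableSingletonClass S] {Y : ι → Ω → S}
    (hY : ∀ i, Measurable (Y i)) (hind : iIndepFun Y μ) (F : (ι → S) → ℝ) :
    ∫ ω, F (fun i => Y i ω) ∂μ = ∑ y, (∏ i, μ.real (Y i ⁻¹' {y i})) * F y := by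
  have := hind.isProbabilityMeasure
  rw [← integral_map (measurable_pi_lambda _ hY).aemeasurable
    (measurable_of_finite F).aestronglyMeasurable,
    hind.map_fun_eq_pi_map fun i => (hY i).aemeasurable, integral_fintype .of_finite]
  refine sum_congr rfl fun y _ => ?_
  rw [smul_eq_mul, measureReal_def, ← Set.univ_pi_singleton, Measure.pi_pi, ENNReal.toReal_prod]
  congr 1
  refine prod_congr rfl fun i _ => ?_
  rw [Measure.map_apply (hY i) (measurableSet_singleton _), measureReal_def]

noncomputable def binCode (x : ℝ) : Fin 2 := if x = 1 then 1 else 0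

theorem measurable_binCode : Measurable binCode :=
  Measurable.ite (measurableSet_singleton 1) measurable_const measurable_const

theorem binCode_eq_iff {x : ℝ} (hx : x = 0 ∨ x = 1) (a : Fin 2) :
    binCode x = a ↔ x = (a : ℕ) := by
  rcases hx with rfl | rfl <;> fin_cases a <;> simp [binCode]

theorem cast_binCode {x : ℝ} (hx : x = 0 ∨ x = 1) : ((binCode x : ℕ) : ℝ) = x :=
  ((binCode_eq_iff hx _).1 rfl).symm

theorem measureReal_binCode_preimage {Ω : Type*} [MeasurableSpace Ω] {μ : Measure Ω}
    {a b : Ω → ℝ} {p₀₀ p₀₁ p₁₁ : ℝ} (h00 : 0 ≤ p₀₀) (h01 : 0 ≤ p₀₁) (h11 : 0 ≤ p₁₁)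
    (hval : ∀ ω, (a ω = 0 ∨ a ω = 1) ∧ (b ω = 0 ∨ b ω = 1))
    (hdist : μ {ω | a ω = 1 ∧ b ω = 1} = ENNReal.ofReal p₁₁ ∧
      μ {ω | a ω = 1 ∧ b ω = 0} = ENNReal.ofReal p₀₁ ∧
      μ {ω | a ω = 0 ∧ b ω = 1} = ENNReal.ofReal p₀₁ ∧
      μ {ω | a ω = 0 ∧ b ω = 0} = ENNReal.ofReal p₀₀) (i j : Fin 2) :
    μ.real ((fun ω => (binCode (a ω), binCode (b ω))) ⁻¹' {(i, j)}) =
      ![![p₀₀, p₀₁], ![p₀₁, p₁₁]] i j := by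
  have hpre : (fun ω => (binCode (a ω), binCode (b ω))) ⁻¹' {(i, j)} =
      {ω | a ω = (i : ℕ) ∧ b ω = (j : ℕ)} := by
    ext ω
    simp [binCode_eq_iff (hval ω).1, binCode_eq_iff (hval ω).2]
  obtain ⟨h₁₁, h₁₀, h₀₁, h₀₀⟩ := hdist
  rw [hpre, measureReal_def]
  fin_cases i <;> fin_cases j <;> simp [h₁₁, h₁₀, h₀₁, h₀₀, h00, h01, h11]

section TransferMatrix

variable (p₀₀ p₀₁ p₁₁ t : ℝ)

noncomputable def transferMatrix : Matrix (Fin 2) (Fin 2) ℝ :=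
  Matrix.of fun b b' =>
    ∑ a : Fin 2, ![![p₀₀, p₀₁], ![p₀₁, p₁₁]] a b * Real.exp (t * (a : ℕ) * (b' : ℕ))

variable {p₀₀ p₀₁ p₁₁}

theorem transferMatrix_eq :
    transferMatrix p₀₀ p₀₁ p₁₁ t =
      !![p₀₀ + p₀₁, p₀₀ + p₀₁ * Real.exp t; p₀₁ + p₁₁, p₀₁ + p₁₁ * Real.exp t] := by
  ext b b'
  fin_cases b <;> fin_cases b' <;> simp [transferMatrix]

theorem trace_transferMatrix (hsum : p₀₀ + 2 * p₀₁ + p₁₁ = 1) :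
    (transferMatrix p₀₀ p₀₁ p₁₁ t).trace = p₁₁ * (Real.exp t - 1) + 1 := by
  rw [transferMatrix_eq, Matrix.trace_fin_two_of]
  linear_combination hsum

theorem det_transferMatrix (hsum : p₀₀ + 2 * p₀₁ + p₁₁ = 1) :
    (transferMatrix p₀₀ p₀₁ p₁₁ t).det =
      (p₁₁ - (p₀₁ + p₁₁) * (p₀₁ + p₁₁)) * (Real.exp t - 1) := by
  rw [transferMatrix_eq, Matrix.det_fin_two_of]
  linear_combination (Real.exp t - 1) * p₁₁ * hsum

end TransferMatrix

theorem stmt_18_general {Ω : Type*} [MeasurableSpace Ω] (μ : Measure Ω)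
    (n : ℕ) (t : ℝ)
    (A B : Fin (n + 1) → Ω → ℝ)
    (p₀₀ p₀₁ p₁₁ : ℝ)
    (hsum : p₀₀ + 2 * p₀₁ + p₁₁ = 1)
    (h00 : 0 ≤ p₀₀) (h01 : 0 ≤ p₀₁) (h11 : 0 ≤ p₁₁)
    (hmeas : ∀ i, Measurable (fun ω => (A i ω, B i ω)))
    (hval : ∀ i ω, (A i ω = 0 ∨ A i ω = 1) ∧ (B i ω = 0 ∨ B i ω = 1))
    (hindep : iIndepFun (fun i ω => (A i ω, B i ω)) μ)
    (hdist : ∀ i,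
      μ {ω | A i ω = 1 ∧ B i ω = 1} = ENNReal.ofReal p₁₁ ∧
      μ {ω | A i ω = 1 ∧ B i ω = 0} = ENNReal.ofReal p₀₁ ∧
      μ {ω | A i ω = 0 ∧ B i ω = 1} = ENNReal.ofReal p₀₁ ∧
      μ {ω | A i ω = 0 ∧ B i ω = 0} = ENNReal.ofReal p₀₀)
    (σ2 T D : ℝ)
    (hσ : σ2 = p₁₁ - (p₀₁ + p₁₁) * (p₀₁ + p₁₁))
    (hT : T = p₁₁ * (Real.exp t - 1) + 1)
    (hD : D = σ2 * (Real.exp t - 1))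
    (hdisc : 0 < T ^ 2 - 4 * D) :
    ∫ ω, Real.exp (t * ∑ i : Fin (n + 1), A i ω * B (i + 1) ω) ∂μ
      = ((T + Real.sqrt (T ^ 2 - 4 * D)) / 2) ^ (n + 1)
        + ((T - Real.sqrt (T ^ 2 - 4 * D)) / 2) ^ (n + 1) := by
  set Y : Fin (n + 1) → Ω → Fin 2 × Fin 2 := fun i ω => (binCode (A i ω), binCode (B i ω))
  have hY : ∀ i, Measurable (Y i) := fun i =>
    (measurable_binCode.prodMap measurable_binCode).comp (hmeas i)
  have hYindep : iIndepFun Y μ :=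
    hindep.comp _ fun _ => measurable_binCode.prodMap measurable_binCode
  let F : (Fin (n + 1) → Fin 2 × Fin 2) → ℝ := fun y =>
    Real.exp (t * ∑ i, (((y i).1 : ℕ) : ℝ) * (((y (i + 1)).2 : ℕ) : ℝ))
  have hsqrt := Real.sq_sqrt hdisc.le
  calc ∫ ω, Real.exp (t * ∑ i : Fin (n + 1), A i ω * B (i + 1) ω) ∂μ
      = ∫ ω, F (fun i => Y i ω) ∂μ := by
        simp only [F, Y, cast_binCode (hval _ _).1, cast_binCode (hval _ _).2]
    _ = ∑ y : Fin (n + 1) → Fin 2 × Fin 2, ∏ i,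
          ![![p₀₀, p₀₁], ![p₀₁, p₁₁]] (y i).1 (y i).2 *
            Real.exp (t * (((y i).1 : ℕ) : ℝ) * (((y (i + 1)).2 : ℕ) : ℝ)) := by
        rw [hYindep.integral_comp_eq_sum hY F]
        refine sum_congr rfl fun y _ => ?_
        simp only [F, Y, measureReal_binCode_preimage h00 h01 h11 (hval _) (hdist _), mul_sum,
          Real.exp_sum, prod_mul_distrib, mul_assoc]
    _ = (transferMatrix p₀₀ p₀₁ p₁₁ t ^ (n + 1)).trace :=
        Matrix.sum_prod_eq_trace_pow (fun a b b' => ![![p₀₀, p₀₁], ![p₀₁, p₁₁]] a b *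
          Real.exp (t * ((a : ℕ) : ℝ) * ((b' : ℕ) : ℝ))) n
    _ = _ := by
        refine Matrix.trace_pow_of_card_eq_two (Fintype.card_fin 2) ?_ ?_ (n + 1)
        · rw [trace_transferMatrix t hsum, ← hT]; ring
        · rw [det_transferMatrix t hsum, ← hσ, ← hD]; linear_combination hsqrt / 4

theorem stmt_18 {Ω : Type*} [MeasurableSpace Ω] (μ : Measure Ω) [IsProbabilityMeasure μ]
    (n : ℕ) (t : ℝ) (ht : 0 < t)
    (A B : Fin (n + 1) → Ω → ℝ)
    (p₀₀ p₀₁ p₁₁ : ℝ)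
    (hsum : p₀₀ + 2 * p₀₁ + p₁₁ = 1)
    (h00 : 0 ≤ p₀₀) (h01 : 0 ≤ p₀₁) (h11 : 0 ≤ p₁₁)
    (hmeas : ∀ i, Measurable (fun ω => (A i ω, B i ω)))
    (hval : ∀ i ω, (A i ω = 0 ∨ A i ω = 1) ∧ (B i ω = 0 ∨ B i ω = 1))
    (hindep : iIndepFun (fun i ω => (A i ω, B i ω)) μ)
    (hdist : ∀ i,
      μ {ω | A i ω = 1 ∧ B i ω = 1} = ENNReal.ofReal p₁₁ ∧
      μ {ω | A i ω = 1 ∧ B i ω = 0} = ENNReal.ofReal p₀₁ ∧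
      μ {ω | A i ω = 0 ∧ B i ω = 1} = ENNReal.ofReal p₀₁ ∧
      μ {ω | A i ω = 0 ∧ B i ω = 0} = ENNReal.ofReal p₀₀)
    (σ2 T D : ℝ)
    (hσ : σ2 = p₁₁ - (p₀₁ + p₁₁) * (p₀₁ + p₁₁))
    (hT : T = p₁₁ * (Real.exp t - 1) + 1)
    (hD : D = σ2 * (Real.exp t - 1))
    (hdisc : 0 < T ^ 2 - 4 * D) :
    ∫ ω, Real.exp (t * ∑ i : Fin (n + 1), A i ω * B (i + 1) ω) ∂μ
      = ((T + Real.sqrt (T ^ 2 - 4 * D)) / 2) ^ (n + 1)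
        + ((T - Real.sqrt (T ^ 2 - 4 * D)) / 2) ^ (n + 1) :=
  stmt_18_general μ n t A B p₀₀ p₀₁ p₁₁ hsum h00 h01 h11 hmeas hval hindep hdist σ2 T D hσ hT hD
    hdisc
end

section
/- For λ ≥ 20, a Poisson random variable with mean 2λ/3 satisfies P(Po(2λ/3) ≥ λ/2 − 1) ≥ 1 − Φ((λ/2 − 1 − 2λ/3)/√(2λ/3)) − 0.55/√(⌈2λ/3⌉), and this lower bound is at least 0.7. -/
/-- The standard normal CDF. -/
noncomputable def stdNormalCDF (x : ℝ) : ℝ :=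
  ∫ u in Set.Iic x, Real.exp (-u ^ 2 / 2) / Real.sqrt (2 * Real.pi)

/-- `P(Po(μ) ≥ a)` for a Poisson random variable of mean `μ` and a real threshold `a`. -/
noncomputable def poissonTail (μ a : ℝ) : ℝ :=
  ∑' k : ℕ, if a ≤ (k : ℝ) then Real.exp (-μ) * μ ^ k / (Nat.factorial k) else 0

/-!
Write `a = λ/2 - 1`, `μ = 2λ/3` and choose `k ∈ ℕ` with `2k + 2 ≤ λ ≤ 2k + 4`, so that `a ≤ k + 1`
and `μ ≥ 4(k + 1)/3`. Rather than through Berry–Esseen, the lower tail is bounded directly: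
comparison with a geometric series gives `P(Po(μ) ≤ k) ≤ e^{-μ} μ^k / k! · μ / (μ - k)`, the right
side decreases in `μ ≥ k`, and Stirling's `k! ≥ √(2πk) (k/e)^k` turns its value at `μ = 4(k + 1)/3`
into `e^{-(k+1)/3} (4/3)^k (4k + 4)/(k + 4) / √(2πk)`. For `k ≥ 22` this is already below
`0.55/√⌈μ⌉`; for `9 ≤ k ≤ 21` the excess is covered by `Φ` at the threshold, which is bounded
below by integrating `e^{-v} ≤ 1 - v + v²/2`. The bound `0.7` integrates `e^{-v} ≥ 1 - v` instead.
-/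

open Real MeasureTheory Set Finset Nat

noncomputable def stdNormalDensity (u : ℝ) : ℝ := exp (-u ^ 2 / 2) / √(2 * π)

lemma stdNormalDensity_nonneg (u : ℝ) : 0 ≤ stdNormalDensity u := by
  unfold stdNormalDensity; positivity

lemma integrable_stdNormalDensity : Integrable stdNormalDensity := by
  convert (integrable_exp_neg_mul_sq (b := 1 / 2) (by norm_num)).div_const (√(2 * π)) using 2 with u
  unfold stdNormalDensity; ring_nf

lemma integral_stdNormalDensity : ∫ u, stdNormalDensity u = 1 := by
  have h : stdNormalDensity = fun u => exp (-(1 / 2) * u ^ 2) / √(2 * π) := by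
    funext u; unfold stdNormalDensity; ring_nf
  rw [h, integral_div, integral_gaussian, div_eq_one_iff_eq (by positivity)]
  norm_num [mul_comm]

lemma stdNormalCDF_mono : Monotone stdNormalCDF := fun _ _ h =>
  setIntegral_mono_set integrable_stdNormalDensity.integrableOn
    (.of_forall stdNormalDensity_nonneg) (Set.Iic_subset_Iic.2 h).eventuallyLE

lemma stdNormalCDF_nonneg (x : ℝ) : 0 ≤ stdNormalCDF x :=
  setIntegral_nonneg measurableSet_Iic fun u _ => stdNormalDensity_nonneg u

lemma stdNormalCDF_zero : stdNormalCDF 0 = 1 / 2 := by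
  have hsum := intervalIntegral.integral_Iic_add_Ioi (b := 0)
    integrable_stdNormalDensity.integrableOn integrable_stdNormalDensity.integrableOn
  have hsymm : ∫ u in Ioi (0 : ℝ), stdNormalDensity u = stdNormalCDF 0 := by
    rw [← neg_zero, ← integral_comp_neg_Iic]; simp [stdNormalCDF, stdNormalDensity]
  rw [integral_stdNormalDensity, hsymm] at hsum
  change stdNormalCDF 0 + stdNormalCDF 0 = 1 at hsum
  linarith

lemma stdNormalCDF_neg (T : ℝ) :
    stdNormalCDF (-T) = 1 / 2 - ∫ u in -T..0, stdNormalDensity u := by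
  rw [← stdNormalCDF_zero, ← intervalIntegral.integral_Iic_sub_Iic
    integrable_stdNormalDensity.integrableOn integrable_stdNormalDensity.integrableOn]
  simp [stdNormalCDF, stdNormalDensity]

lemma exp_neg_le_one_sub_add_sq_div_two {v : ℝ} (hv : 0 ≤ v) : exp (-v) ≤ 1 - v + v ^ 2 / 2 := by
  have hq := quadratic_le_exp_of_nonneg hv
  rw [exp_neg, inv_le_iff_one_le_mul₀ (exp_pos v)]
  nlinarith [pow_nonneg hv 4]

lemma stdNormalCDF_neg_le {T : ℝ} (hT : 0 ≤ T) :
    stdNormalCDF (-T) ≤ 1 / 2 - (T - T ^ 3 / 6) / √(2 * π) := by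
  have hpoly : ∫ u in -T..0, (1 - u ^ 2 / 2) / √(2 * π) = (T - T ^ 3 / 6) / √(2 * π) := by
    norm_num [intervalIntegral.integral_div, intervalIntegral.integral_sub, integral_pow]
    ring
  rw [stdNormalCDF_neg, ← hpoly]
  refine sub_le_sub_left (intervalIntegral.integral_mono_on (by linarith)
    ((by fun_prop : Continuous fun u : ℝ => (1 - u ^ 2 / 2) / √(2 * π)).intervalIntegrable _ _)
    integrable_stdNormalDensity.intervalIntegrable fun u _ => ?_) _
  rw [stdNormalDensity, neg_div]
  gcongr
  exact one_sub_le_exp_neg _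

lemma le_stdNormalCDF_neg {T : ℝ} (hT : 0 ≤ T) :
    1 / 2 - (T - T ^ 3 / 6 + T ^ 5 / 40) / √(2 * π) ≤ stdNormalCDF (-T) := by
  have hpoly : ∫ u in -T..0, (1 - u ^ 2 / 2 + u ^ 4 / 8) / √(2 * π)
      = (T - T ^ 3 / 6 + T ^ 5 / 40) / √(2 * π) := by
    rw [intervalIntegral.integral_div, intervalIntegral.integral_add
      ((by fun_prop : Continuous fun u : ℝ => 1 - u ^ 2 / 2).intervalIntegrable _ _)
      ((by fun_prop : Continuous fun u : ℝ => u ^ 4 / 8).intervalIntegrable _ _)]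
    norm_num [intervalIntegral.integral_sub, integral_pow]
    ring
  have hcont : Continuous fun u : ℝ => (1 - u ^ 2 / 2 + u ^ 4 / 8) / √(2 * π) := by fun_prop
  rw [stdNormalCDF_neg, ← hpoly]
  refine sub_le_sub_left (intervalIntegral.integral_mono_on (by linarith)
    integrable_stdNormalDensity.intervalIntegrable (hcont.intervalIntegrable _ _) fun u _ => ?_) _
  rw [stdNormalDensity, neg_div]
  gcongr
  exact (exp_neg_le_one_sub_add_sq_div_two (by positivity)).trans_eq (by ring)

lemma one_sub_sum_le_poissonTail {μ a : ℝ} (hμ : 0 ≤ μ) {k : ℕ} (ha : a ≤ k + 1) :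
    1 - ∑ j ∈ range (k + 1), exp (-μ) * μ ^ j / (j)! ≤ poissonTail μ a := by
  set p : ℕ → ℝ := fun n => exp (-μ) * μ ^ n / (n)!
  have hp : HasSum p 1 := ProbabilityTheory.hasSum_one_poissonMeasure ⟨μ, hμ⟩
  have hp0 : ∀ n, 0 ≤ p n := fun n => by positivity
  set f : ℕ → ℝ := fun n => if a ≤ n then p n else 0
  have hf0 : ∀ n, 0 ≤ f n := fun n => by by_cases h : a ≤ n <;> simp [f, h, hp0]
  have hf : Summable f :=
    hp.summable.of_nonneg_of_le hf0 fun n => by by_cases h : a ≤ n <;> simp [f, h, hp0]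
  have htail : ∀ n, f (n + (k + 1)) = p (n + (k + 1)) := fun n => if_pos (by push_cast; linarith)
  have hsplit := (hf.sum_add_tsum_nat_add (k + 1)).symm
  rw [funext htail, ← sub_eq_of_eq_add' ((hp.summable.sum_add_tsum_nat_add (k + 1)).trans
    hp.tsum_eq).symm] at hsplit
  change 1 - ∑ j ∈ range (k + 1), p j ≤ ∑' n, f n
  linarith [Finset.sum_nonneg fun n (_ : n ∈ range (k + 1)) => hf0 n]

lemma sum_range_pow_div_factorial_le {μ : ℝ} {k : ℕ} (hk : (k : ℝ) < μ) :
    ∑ j ∈ range (k + 1), μ ^ j / (j)! ≤ μ ^ k / (k)! * (μ / (μ - k)) := by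
  induction k with
  | zero => simp [(show (0 : ℝ) < μ by simpa using hk).ne']
  | succ k ih =>
    push_cast at hk ⊢
    have hμk : 0 < μ - (k + 1) := by linarith
    have hμ : 0 < μ := by linarith [(Nat.cast_nonneg k : (0 : ℝ) ≤ k)]
    have hstep : μ / (μ - k) + μ / (k + 1) ≤ μ / (k + 1) * (μ / (μ - (k + 1))) := by
      rw [div_add_div _ _ (by linarith) (by positivity), div_mul_div_comm _ _ _ (μ - (k + 1)),
        div_le_div_iff₀ (by nlinarith) (by positivity)]
      nlinarith [mul_pos hμ (by positivity : (0 : ℝ) < ((k : ℝ) + 1) ^ 2)]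
    rw [sum_range_succ, pow_succ, factorial_succ, cast_mul]
    calc _ ≤ μ ^ k / (k)! * (μ / (μ - k)) + μ ^ k * μ / ((k + 1 : ℕ) * (k)!) := by
          gcongr; exact ih (by linarith)
      _ = μ ^ k / (k)! * (μ / (μ - k) + μ / (k + 1)) := by push_cast; field_simp
      _ ≤ μ ^ k / (k)! * (μ / (k + 1) * (μ / (μ - (k + 1)))) := by gcongr
      _ = _ := by push_cast; field_simp

lemma exp_neg_mul_pow_le {k : ℕ} {μ₀ μ : ℝ} (hμ₀ : 0 < μ₀) (hk : (k : ℝ) ≤ μ₀) (h : μ₀ ≤ μ) :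
    exp (-μ) * μ ^ k ≤ exp (-μ₀) * μ₀ ^ k := by
  have hμ : 0 < μ := by linarith
  have hratio : (μ / μ₀) ^ k ≤ exp (μ - μ₀) :=
    calc (μ / μ₀) ^ k ≤ exp ((μ - μ₀) / μ₀) ^ k := by
          gcongr
          have : (μ - μ₀) / μ₀ + 1 = μ / μ₀ := by field_simp; ring
          linarith [add_one_le_exp ((μ - μ₀) / μ₀)]
      _ = exp (k * ((μ - μ₀) / μ₀)) := (exp_nat_mul _ k).symm
      _ ≤ exp (μ - μ₀) := by
          gcongr
          rw [mul_div_assoc', div_le_iff₀ hμ₀]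
          nlinarith
  have hexp : exp (-μ) = exp (-μ₀) * exp (-(μ - μ₀)) := by rw [← exp_add]; ring_nf
  calc exp (-μ) * μ ^ k = exp (-μ₀) * μ₀ ^ k * ((μ / μ₀) ^ k * exp (-(μ - μ₀))) := by
        rw [hexp, div_pow]; field_simp
    _ ≤ exp (-μ₀) * μ₀ ^ k * (exp (μ - μ₀) * exp (-(μ - μ₀))) := by gcongr
    _ = exp (-μ₀) * μ₀ ^ k := by rw [← exp_add, add_neg_cancel, exp_zero, mul_one]

lemma one_add_inv_pow_le_exp_one (k : ℕ) : (1 + 1 / (k : ℝ)) ^ k ≤ exp 1 := by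
  rcases eq_or_ne k 0 with rfl | hk
  · simp
  calc (1 + 1 / (k : ℝ)) ^ k ≤ exp (1 / k) ^ k := by
        gcongr; linarith [add_one_le_exp (1 / (k : ℝ))]
    _ = exp 1 := by rw [← exp_nat_mul, mul_one_div_cancel (by exact_mod_cast hk)]

noncomputable def poissonLowerTailBound (k : ℕ) : ℝ :=
  exp (-(k + 1) / 3) * (4 / 3) ^ k * ((4 * k + 4) / (k + 4)) / √(2 * π * k)

lemma sum_poissonPMF_le_poissonLowerTailBound {μ : ℝ} {k : ℕ} (hk : k ≠ 0)
    (hμ : 4 * (k + 1) / 3 ≤ μ) :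
    ∑ j ∈ range (k + 1), exp (-μ) * μ ^ j / (j)! ≤ poissonLowerTailBound k := by
  set μ₀ : ℝ := 4 * (k + 1) / 3 with hμ₀
  have hk0 : (0 : ℝ) < k := by exact_mod_cast Nat.pos_of_ne_zero hk
  have hkμ₀ : (k : ℝ) < μ₀ := by linarith
  have hratio : μ / (μ - k) ≤ μ₀ / (μ₀ - k) := by
    rw [div_le_div_iff₀ (by linarith) (by linarith)]; nlinarith
  have hμ₀k : μ₀ / (μ₀ - k) = (4 * k + 4) / (k + 4) := by
    rw [div_eq_div_iff (by linarith) (by positivity)]; ring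
  have hμ₀pow : μ₀ ^ k ≤ (4 / 3) ^ k * k ^ k * exp 1 := by
    calc μ₀ ^ k = (4 / 3) ^ k * k ^ k * (1 + 1 / (k : ℝ)) ^ k := by
          rw [← mul_pow, ← mul_pow, hμ₀]; field_simp
      _ ≤ (4 / 3) ^ k * k ^ k * exp 1 := by gcongr; exact one_add_inv_pow_le_exp_one k
  calc ∑ j ∈ range (k + 1), exp (-μ) * μ ^ j / (j)!
      = exp (-μ) * ∑ j ∈ range (k + 1), μ ^ j / (j)! := by
        rw [mul_sum]; simp_rw [mul_div_assoc]
    _ ≤ exp (-μ) * (μ ^ k / (k)! * (μ / (μ - k))) := by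
        gcongr; exact sum_range_pow_div_factorial_le (by linarith)
    _ = exp (-μ) * μ ^ k * (μ / (μ - k)) / (k)! := by ring
    _ ≤ exp (-μ₀) * μ₀ ^ k * (μ₀ / (μ₀ - k)) / (k)! :=
        div_le_div_of_nonneg_right (mul_le_mul (exp_neg_mul_pow_le (by linarith) hkμ₀.le hμ)
          hratio (div_nonneg (by linarith) (by linarith)) (by positivity)) (by positivity)
    _ ≤ exp (-μ₀) * ((4 / 3) ^ k * k ^ k * exp 1) * ((4 * k + 4) / (k + 4))
          / (√(2 * π * k) * (k / exp 1) ^ k) := by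
        rw [hμ₀k]; gcongr; exact Stirling.le_factorial_stirling k
    _ = poissonLowerTailBound k := by
        have hexp : exp (-μ₀) * exp 1 * exp k = exp (-(k + 1) / 3) := by
          rw [← exp_add, ← exp_add, hμ₀]; ring_nf
        rw [poissonLowerTailBound, div_pow (k : ℝ), exp_one_pow, ← hexp]
        field_simp

lemma exp_neg_one_third_le : exp (-(1 / 3)) ≤ 0.7166 := by
  rw [← pow_le_pow_iff_left₀ (exp_pos _).le (by norm_num) three_ne_zero, ← exp_nat_mul]
  norm_num
  linarith [exp_neg_one_lt_d9]

lemma sqrt_two_pi_gt : 2.5066 < √(2 * π) := by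
  rw [lt_sqrt (by norm_num)]; linarith [pi_gt_d6]

/-- `hcert` bounds `√k * poissonLowerTailBound k` uniformly in `k ≥ k₁`, using
`e^{-1/3} ≤ 0.7166` and `√(2π) > 2.5066`. -/
lemma poissonLowerTailBound_le_add {k k₁ : ℕ} {r s t c : ℝ} (hk : k₁ ≤ k)
    (hr : (4 * k + 4) / (k + 4) ≤ r) (hs : 0 < s) (hks : (4 * k + 11) / 3 ≤ s ^ 2 * k)
    (ht : 0 ≤ t) (hkt : t ^ 2 ≤ k) (hc : 0 ≤ c)
    (hcert : 0.7166 * (0.7166 * (4 / 3)) ^ k₁ * r / 2.5066 ≤ 0.55 / s + c * t) :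
    poissonLowerTailBound k ≤ 0.55 / √((4 * k + 11) / 3) + c := by
  have hk0 : (0 : ℝ) < k := by
    by_contra h; nlinarith [sq_nonneg s, (Nat.cast_nonneg k : (0 : ℝ) ≤ k)]
  have hr0 : 0 ≤ r := le_trans (by positivity) hr
  have hexp : exp (-(k + 1) / 3) ≤ 0.7166 ^ (k + 1) := by
    rw [show -((k : ℝ) + 1) / 3 = (k + 1 : ℕ) * (-(1 / 3)) by push_cast; ring, exp_nat_mul]
    gcongr; exact exp_neg_one_third_le
  have hnum : exp (-(k + 1) / 3) * (4 / 3) ^ k * ((4 * k + 4) / (k + 4))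
      ≤ 0.7166 * (0.7166 * (4 / 3)) ^ k₁ * r :=
    calc _ ≤ 0.7166 ^ (k + 1) * (4 / 3) ^ k * r := by gcongr
      _ = 0.7166 * (0.7166 * (4 / 3)) ^ k * r := by rw [pow_succ, mul_pow]; ring
      _ ≤ 0.7166 * (0.7166 * (4 / 3)) ^ k₁ * r :=
        mul_le_mul_of_nonneg_right (mul_le_mul_of_nonneg_left
          (pow_le_pow_of_le_one (by norm_num) (by norm_num) hk) (by norm_num)) hr0
  have hsk : √((4 * k + 11) / 3) ≤ s * √k := by
    rw [← sqrt_sq hs.le, ← sqrt_mul (sq_nonneg _)]; exact sqrt_le_sqrt hks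
  have htk : t / √k ≤ 1 := (div_le_one (sqrt_pos.2 hk0)).2 ((le_sqrt ht hk0.le).2 hkt)
  calc poissonLowerTailBound k
      = exp (-(k + 1) / 3) * (4 / 3) ^ k * ((4 * k + 4) / (k + 4)) / √(2 * π) / √k := by
        rw [poissonLowerTailBound, sqrt_mul (by positivity : (0 : ℝ) ≤ 2 * π), div_div]
    _ ≤ (0.55 / s + c * t) / √k := by
        gcongr
        exact (div_le_div₀ (by positivity) hnum (by norm_num) sqrt_two_pi_gt.le).trans hcert
    _ = 0.55 / (s * √k) + c * (t / √k) := by field_simp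
    _ ≤ 0.55 / √((4 * k + 11) / 3) + c * 1 := by gcongr
    _ = 0.55 / √((4 * k + 11) / 3) + c := by rw [mul_one]

lemma standardized_threshold_eq {l : ℝ} (hl : 0 < l) :
    (l / 2 - 1 - 2 * l / 3) / √(2 * l / 3) = -√((l + 6) ^ 2 / (24 * l)) := by
  have h24 : √(24 * l) = 6 * √(2 * l / 3) := by
    rw [show 24 * l = 6 ^ 2 * (2 * l / 3) by ring, sqrt_mul (by norm_num), sqrt_sq (by norm_num)]
  have hpos : 0 < √(2 * l / 3) := sqrt_pos.2 (by positivity)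
  rw [sqrt_div' ((l + 6) ^ 2) (by positivity : (0 : ℝ) ≤ 24 * l), sqrt_sq (by positivity), h24]
  field_simp
  ring

lemma le_stdNormalCDF_threshold {l T : ℝ} (hl : 0 < l) (hT : 0 ≤ T)
    (h : (l + 6) ^ 2 ≤ 24 * T ^ 2 * l) :
    1 / 2 - (T - T ^ 3 / 6 + T ^ 5 / 40) / 2.5066
      ≤ stdNormalCDF ((l / 2 - 1 - 2 * l / 3) / √(2 * l / 3)) := by
  have hsqrt : √((l + 6) ^ 2 / (24 * l)) ≤ T := by
    rw [sqrt_le_left hT, div_le_iff₀ (by positivity)]; linarith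
  have hpoly : 0 ≤ T - T ^ 3 / 6 + T ^ 5 / 40 := by
    nlinarith [sq_nonneg (T ^ 2 - 10 / 3), pow_nonneg hT 3]
  calc 1 / 2 - (T - T ^ 3 / 6 + T ^ 5 / 40) / 2.5066
      ≤ 1 / 2 - (T - T ^ 3 / 6 + T ^ 5 / 40) / √(2 * π) := by
        gcongr; exact sqrt_two_pi_gt.le
    _ ≤ stdNormalCDF (-T) := le_stdNormalCDF_neg hT
    _ ≤ _ := by rw [standardized_threshold_eq hl]; exact stdNormalCDF_mono (neg_le_neg hsqrt)

lemma stdNormalCDF_threshold_le {l T : ℝ} (hl : 0 < l) (hT : 0 ≤ T) (hT6 : T ^ 2 ≤ 6)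
    (h : 24 * T ^ 2 * l ≤ (l + 6) ^ 2) :
    stdNormalCDF ((l / 2 - 1 - 2 * l / 3) / √(2 * l / 3))
      ≤ 1 / 2 - (T - T ^ 3 / 6) / 2.5067 := by
  have hsqrt : T ≤ √((l + 6) ^ 2 / (24 * l)) := by
    rw [le_sqrt hT (by positivity), le_div_iff₀ (by positivity)]; linarith
  have hsqrt2pi : √(2 * π) ≤ 2.5067 := by
    rw [sqrt_le_left (by norm_num)]; linarith [pi_lt_d6]
  calc stdNormalCDF ((l / 2 - 1 - 2 * l / 3) / √(2 * l / 3)) ≤ stdNormalCDF (-T) := by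
        rw [standardized_threshold_eq hl]; exact stdNormalCDF_mono (neg_le_neg hsqrt)
    _ ≤ 1 / 2 - (T - T ^ 3 / 6) / √(2 * π) := stdNormalCDF_neg_le hT
    _ ≤ 1 / 2 - (T - T ^ 3 / 6) / 2.5067 := by
        have : 0 ≤ T - T ^ 3 / 6 := by nlinarith
        gcongr

lemma poissonLowerTailBound_le {k : ℕ} {l : ℝ} (hk : 9 ≤ k) (hl : 20 ≤ l)
    (hkl : l ≤ 2 * k + 4) :
    poissonLowerTailBound k
      ≤ 0.55 / √((4 * k + 11) / 3) + stdNormalCDF ((l / 2 - 1 - 2 * l / 3) / √(2 * l / 3)) := by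
  have hk9 : (9 : ℝ) ≤ k := by exact_mod_cast hk
  -- For `k ≤ 21` the bound exceeds `0.55 / √⌈μ⌉` and `Φ` at the threshold (`l ≤ 30`, resp.
  -- `l ≤ 46`) covers the excess `c`; from `k = 22` on no help from `Φ` is needed.
  rcases le_or_gt k 13 with hk13 | hk13
  · have hk13' : (k : ℝ) ≤ 13 := by exact_mod_cast hk13
    have hΦ : 0.075 ≤ stdNormalCDF ((l / 2 - 1 - 2 * l / 3) / √(2 * l / 3)) :=
      le_trans (by norm_num) (le_stdNormalCDF_threshold (T := 1.35) (by linarith) (by norm_num)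
        (by nlinarith))
    have hρ : (4 * k + 4) / (k + 4) ≤ (56 / 17 : ℝ) := by
      rw [div_le_div_iff₀ (by positivity) (by norm_num)]; linarith
    have := poissonLowerTailBound_le_add (k₁ := 9) (s := 1.32) (t := 3) (c := 0.075) hk hρ
      (by norm_num) (by linarith) (by norm_num) (by linarith) (by norm_num) (by norm_num)
    linarith
  rcases le_or_gt k 21 with hk21 | hk21
  · have hk14 : (14 : ℝ) ≤ k := by exact_mod_cast hk13
    have hk21' : (k : ℝ) ≤ 21 := by exact_mod_cast hk21
    have hΦ : 0.03 ≤ stdNormalCDF ((l / 2 - 1 - 2 * l / 3) / √(2 * l / 3)) :=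
      le_trans (by norm_num) (le_stdNormalCDF_threshold (T := 1.57) (by linarith) (by norm_num)
        (by nlinarith))
    have hρ : (4 * k + 4) / (k + 4) ≤ (88 / 25 : ℝ) := by
      rw [div_le_div_iff₀ (by positivity) (by norm_num)]; linarith
    have := poissonLowerTailBound_le_add (k₁ := 14) (s := 1.27) (t := 3.74) (c := 0.03) hk13 hρ
      (by norm_num) (by linarith) (by norm_num) (by linarith) (by norm_num) (by norm_num)
    linarith
  · have hk22 : (22 : ℝ) ≤ k := by exact_mod_cast hk21
    have hρ : (4 * k + 4) / (k + 4) ≤ (4 : ℝ) := by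
      rw [div_le_iff₀ (by positivity)]; linarith
    have := poissonLowerTailBound_le_add (k₁ := 22) (s := 1.2248) (t := 0) (c := 0) hk21 hρ
      (by norm_num) (by linarith) le_rfl (by norm_num) le_rfl (by norm_num)
    linarith [stdNormalCDF_nonneg ((l / 2 - 1 - 2 * l / 3) / √(2 * l / 3))]

lemma exists_nat_window {l : ℝ} (hl : 20 ≤ l) :
    ∃ k : ℕ, 9 ≤ k ∧ 2 * (k : ℝ) + 2 ≤ l ∧ l ≤ 2 * k + 4 := by
  have h10 : 10 ≤ ⌊l / 2⌋₊ := Nat.le_floor (by push_cast; linarith)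
  have hfloor : ((⌊l / 2⌋₊ - 1 : ℕ) : ℝ) = ⌊l / 2⌋₊ - 1 := by
    push_cast [Nat.cast_sub (by omega : 1 ≤ ⌊l / 2⌋₊)]; ring
  refine ⟨⌊l / 2⌋₊ - 1, by omega, ?_, ?_⟩ <;> rw [hfloor]
  · linarith [Nat.floor_le (by linarith : 0 ≤ l / 2)]
  · linarith [Nat.lt_floor_add_one (l / 2)]

lemma seven_tenths_le_berryEsseenBound {l : ℝ} (hl : 20 ≤ l) :
    (0.7 : ℝ) ≤ 1 - stdNormalCDF ((l / 2 - 1 - 2 * l / 3) / √(2 * l / 3))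
        - 0.55 / √(⌈2 * l / 3⌉₊ : ℝ) := by
  have hΦ := stdNormalCDF_threshold_le (T := 1.18) (by linarith) (by norm_num) (by norm_num)
    (by nlinarith : 24 * 1.18 ^ 2 * l ≤ (l + 6) ^ 2)
  have hceil : (14 : ℝ) ≤ ⌈2 * l / 3⌉₊ := by
    exact_mod_cast Nat.lt_ceil.2 (by push_cast; linarith : ((13 : ℕ) : ℝ) < 2 * l / 3)
  have hsqrt : 3.74 ≤ √(⌈2 * l / 3⌉₊ : ℝ) := (le_sqrt (by norm_num) (by positivity)).2 (by linarith)
  have : 0.55 / √(⌈2 * l / 3⌉₊ : ℝ) ≤ 0.55 / 3.74 := by gcongr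
  norm_num at hΦ this ⊢
  linarith

theorem stmt_19 (l : ℝ) (hl : 20 ≤ l) :
    1 - stdNormalCDF ((l / 2 - 1 - 2 * l / 3) / Real.sqrt (2 * l / 3))
        - 0.55 / Real.sqrt (⌈2 * l / 3⌉₊ : ℝ)
      ≤ poissonTail (2 * l / 3) (l / 2 - 1) ∧
    (0.7 : ℝ) ≤ 1 - stdNormalCDF ((l / 2 - 1 - 2 * l / 3) / Real.sqrt (2 * l / 3))
        - 0.55 / Real.sqrt (⌈2 * l / 3⌉₊ : ℝ) := by
  refine ⟨?_, seven_tenths_le_berryEsseenBound hl⟩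
  obtain ⟨k, hk, hkl, hlk⟩ := exists_nat_window hl
  have htail := one_sub_sum_le_poissonTail (μ := 2 * l / 3) (a := l / 2 - 1) (k := k)
    (by linarith) (by linarith)
  have hsum := sum_poissonPMF_le_poissonLowerTailBound (μ := 2 * l / 3) (k := k)
    (by omega) (by linarith)
  have hbound := poissonLowerTailBound_le hk hl hlk
  have hceil : 0.55 / √((4 * (k : ℝ) + 11) / 3) ≤ 0.55 / √(⌈2 * l / 3⌉₊ : ℝ) := by
    have := Nat.ceil_lt_add_one (by linarith : 0 ≤ 2 * l / 3)
    have : (0 : ℝ) < ⌈2 * l / 3⌉₊ := by linarith [Nat.le_ceil (2 * l / 3)]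
    gcongr
    linarith
  linarith
end
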